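/- Let f = (f₀,f₁,ε) : 𝕎 → 𝕍 be a morphism of 2-term L∞-algebras over a commutative unital ring K. Equip E := V₁ ⊕ W₀ with the bracket [(k,x),(l,y)] := ([∂k,l] + [f₀x,l] + [k,f₀y] + ε(x,y), [x,y]) and the maps κ(l) = (−f₁l, ∂l), ι(k) = (k,0), σ(k,x) = x, ρ(k,x) = ∂k + f₀x. Then (E, [·,·], κ, ι, σ, ρ) is a butterfly from 𝕎 to 𝕍; in particular σ∘κ = ∂_W, ρ∘ι = ∂_V, ρ∘κ = 0, σ∘ι = 0, the sequence 0 → V₁ →(ι) E →(σ) W₀ → 0 is short exact, and all the bracket compatibility axioms of a butterfly hold. -/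

import Mathlib

/-- A 2-term L∞-algebra `[∂ : V₁ → V₀]` over a commutative unital ring `K`:
a `K`-linear map `d : V₁ →ₗ[K] V₀`, bilinear brackets
`br0 : V₀×V₀ → V₀`, `br01 : V₀×V₁ → V₁`, `br10 : V₁×V₀ → V₁`, and an
antisymmetric trilinear Jacobiator `jac : V₀×V₀×V₀ → V₁`, satisfying the
axioms of Baez–Crans. -/
structure TwoTermL (K : Type*) [CommRing K] (V₁ V₀ : Type*)
    [AddCommGroup V₁] [Module K V₁] [AddCommGroup V₀] [Module K V₀] where
  d : V₁ →ₗ[K] V₀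
  br0 : V₀ →ₗ[K] V₀ →ₗ[K] V₀
  br01 : V₀ →ₗ[K] V₁ →ₗ[K] V₁
  br10 : V₁ →ₗ[K] V₀ →ₗ[K] V₁
  jac : V₀ →ₗ[K] V₀ →ₗ[K] V₀ →ₗ[K] V₁
  br0_antisymm : ∀ x y : V₀, br0 x y = - br0 y x
  br01_antisymm : ∀ (x : V₀) (h : V₁), br01 x h = - br10 h x
  d_br01 : ∀ (x : V₀) (h : V₁), d (br01 x h) = br0 x (d h)
  br01_d : ∀ h k : V₁, br01 (d h) k = br10 h (d k)
  jac_swap₁ : ∀ x y z : V₀, jac x y z = - jac y x z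
  jac_swap₂ : ∀ x y z : V₀, jac x y z = - jac x z y
  d_jac : ∀ x y z : V₀,
    d (jac x y z) = br0 x (br0 y z) + br0 y (br0 z x) + br0 z (br0 x y)
  jac_d : ∀ (x y : V₀) (h : V₁),
    jac x y (d h) = br01 x (br01 y h) + br01 y (br10 h x) + br10 h (br0 x y)
  coherence : ∀ w x y z : V₀,
    br10 (jac x y z) w - br10 (jac w x y) z + br10 (jac z w x) y
        - br10 (jac y z w) x
      = jac (br0 x y) z w + jac (br0 z w) x y + jac (br0 x z) w y
        + jac (br0 w y) x z + jac (br0 x w) y z + jac (br0 y z) x w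

variable {K : Type*} [CommRing K]
variable {W₁ W₀ V₁ V₀ U₁ U₀ : Type*}
  [AddCommGroup W₁] [Module K W₁] [AddCommGroup W₀] [Module K W₀]
  [AddCommGroup V₁] [Module K V₁] [AddCommGroup V₀] [Module K V₀]
  [AddCommGroup U₁] [Module K U₁] [AddCommGroup U₀] [Module K U₀]

/-- A (weak) morphism `f = (f₀, f₁, ε)` of 2-term L∞-algebras. -/
structure TwoTermMor (TW : TwoTermL K W₁ W₀) (TV : TwoTermL K V₁ V₀) where
  f₀ : W₀ →ₗ[K] V₀
  f₁ : W₁ →ₗ[K] V₁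
  ε : W₀ →ₗ[K] W₀ →ₗ[K] V₁
  ε_antisymm : ∀ x y : W₀, ε x y = - ε y x
  compat_d : ∀ h : W₁, TV.d (f₁ h) = f₀ (TW.d h)
  compat_br0 : ∀ x y : W₀,
    TV.br0 (f₀ x) (f₀ y) - f₀ (TW.br0 x y) = TV.d (ε x y)
  compat_br01 : ∀ (x : W₀) (k : W₁),
    TV.br01 (f₀ x) (f₁ k) - f₁ (TW.br01 x k) = ε x (TW.d k)
  compat_jac : ∀ x y z : W₀,
    TV.jac (f₀ x) (f₀ y) (f₀ z) - f₁ (TW.jac x y z)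
      = ε x (TW.br0 y z) + ε y (TW.br0 z x) + ε z (TW.br0 x y)
        + TV.br01 (f₀ x) (ε y z) + TV.br01 (f₀ y) (ε z x)
        + TV.br01 (f₀ z) (ε x y)

/-- A transformation (L∞-homotopy) from the morphism `a` to the morphism `b`:
a `K`-linear map `θ : W₀ → V₁` with `b₀ - a₀ = ∂∘θ`, `b₁ - a₁ = θ∘∂`, and
`[θx,θy] - θ[x,y] = ε_b(x,y) - ε_a(x,y) + [a₀y,θx] + [θy,a₀x]`,
where `[θx,θy] := [∂θx,θy]`. -/
def IsTransformation {TW : TwoTermL K W₁ W₀} {TV : TwoTermL K V₁ V₀}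
    (a b : TwoTermMor TW TV) (θ : W₀ →ₗ[K] V₁) : Prop :=
  (∀ x : W₀, b.f₀ x - a.f₀ x = TV.d (θ x)) ∧
  (∀ h : W₁, b.f₁ h - a.f₁ h = θ (TW.d h)) ∧
  (∀ x y : W₀,
    TV.br01 (TV.d (θ x)) (θ y) - θ (TW.br0 x y)
      = b.ε x y - a.ε x y + TV.br01 (a.f₀ y) (θ x) + TV.br10 (θ y) (a.f₀ x))

/-- A butterfly `B : 𝕎 → 𝕍` between 2-term L∞-algebras: a `K`-module `E` with
an antisymmetric bracket and linear maps `κ, ι, σ, ρ` such that both diagonals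
are complexes, the NE–SW sequence `0 → V₁ → E → W₀ → 0` is short exact, and the
bracket compatibility axioms hold. -/
structure Butterfly (TW : TwoTermL K W₁ W₀) (TV : TwoTermL K V₁ V₀)
    (E : Type*) [AddCommGroup E] [Module K E] where
  br : E →ₗ[K] E →ₗ[K] E
  br_antisymm : ∀ a b : E, br a b = - br b a
  κ : W₁ →ₗ[K] E
  ι : V₁ →ₗ[K] E
  σ : E →ₗ[K] W₀
  ρ : E →ₗ[K] V₀
  σ_κ : ∀ l : W₁, σ (κ l) = TW.d l
  ρ_ι : ∀ k : V₁, ρ (ι k) = TV.d k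
  ρ_κ : ∀ l : W₁, ρ (κ l) = 0
  σ_ι : ∀ k : V₁, σ (ι k) = 0
  ι_inj : Function.Injective ι
  ker_σ_eq_range_ι : LinearMap.ker σ = LinearMap.range ι
  σ_surj : Function.Surjective σ
  ρ_br : ∀ a b : E, ρ (br a b) = TV.br0 (ρ a) (ρ b)
  σ_br : ∀ a b : E, σ (br a b) = TW.br0 (σ a) (σ b)
  br_ι : ∀ (a : E) (h : V₁), br a (ι h) = ι (TV.br01 (ρ a) h)
  br_κ : ∀ (a : E) (l : W₁), br a (κ l) = κ (TW.br01 (σ a) l)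
  jacobi : ∀ a b c : E,
    ι (TV.jac (ρ a) (ρ b) (ρ c)) + κ (TW.jac (σ a) (σ b) (σ c))
      = br a (br b c) + br b (br c a) + br c (br a b)

/-! The only butterfly axiom that is not a direct consequence of one axiom of `f` is the
Jacobi identity. Its defect `ι⟨ρa,ρb,ρc⟩ + κ⟨σa,σb,σc⟩ - ([a,[b,c]] + cyclic)` is additive
and cyclic in `a, b, c`, and it vanishes as soon as one argument is some `ι m`: then
`[a, ι m] = ι [ρa, m]` reduces it to `ι` of the Leibniz form
`⟨x, y, ∂m⟩ = [x,[y,m]] - [y,[x,m]] - [[x,y],m]` of the axiom on `⟨·,·,∂·⟩`.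
So it suffices to treat `a, b, c ∈ 0 × W₀`, where the first component of the defect is the
Jacobiator condition on `(f₀, f₁, ε)` and the second is `∂⟨x,y,z⟩ = [x,[y,z]] + cyclic` in `𝕎`. -/

namespace TwoTermL

variable (L : TwoTermL K V₁ V₀)

lemma br01_d_comm (h k : V₁) : L.br01 (L.d h) k = -L.br01 (L.d k) h := by
  rw [L.br01_d, L.br01_antisymm, neg_neg]

lemma d_br10 (h : V₁) (x : V₀) : L.d (L.br10 h x) = L.br0 (L.d h) x := by
  rw [← neg_neg (L.br10 h x), ← L.br01_antisymm, map_neg, L.d_br01, L.br0_antisymm, neg_neg]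

lemma jac_cycle (x y z : V₀) : L.jac x y z = L.jac y z x := by
  rw [L.jac_swap₁, L.jac_swap₂, neg_neg]

lemma jac_d_leibniz (x y : V₀) (h : V₁) :
    L.jac x y (L.d h) = L.br01 x (L.br01 y h) - L.br01 y (L.br01 x h) - L.br01 (L.br0 x y) h := by
  rw [L.jac_d, L.br01_antisymm x h, L.br01_antisymm (L.br0 x y) h, map_neg]
  abel

end TwoTermL

section JacobiDefect

variable {E : Type*} [AddCommGroup E] [Module K E]

def jacobiDefect (TW : TwoTermL K W₁ W₀) (TV : TwoTermL K V₁ V₀) (br : E →ₗ[K] E →ₗ[K] E)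
    (κ : W₁ →ₗ[K] E) (ι : V₁ →ₗ[K] E) (σ : E →ₗ[K] W₀) (ρ : E →ₗ[K] V₀) (a b c : E) : E :=
  ι (TV.jac (ρ a) (ρ b) (ρ c)) + κ (TW.jac (σ a) (σ b) (σ c))
    - (br a (br b c) + br b (br c a) + br c (br a b))

variable {TW : TwoTermL K W₁ W₀} {TV : TwoTermL K V₁ V₀} {br : E →ₗ[K] E →ₗ[K] E}
  {κ : W₁ →ₗ[K] E} {ι : V₁ →ₗ[K] E} {σ : E →ₗ[K] W₀} {ρ : E →ₗ[K] V₀}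

lemma jacobiDefect_cycle (a b c : E) :
    jacobiDefect TW TV br κ ι σ ρ a b c = jacobiDefect TW TV br κ ι σ ρ b c a := by
  rw [jacobiDefect, jacobiDefect, TV.jac_cycle, TW.jac_cycle]
  abel

lemma jacobiDefect_ι_right (hanti : ∀ a b, br a b = -br b a)
    (hbrι : ∀ a h, br a (ι h) = ι (TV.br01 (ρ a) h))
    (hρbr : ∀ a b, ρ (br a b) = TV.br0 (ρ a) (ρ b)) (hρι : ∀ h, ρ (ι h) = TV.d h)
    (hσι : ∀ h, σ (ι h) = 0) (a b : E) (m : V₁) :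
    jacobiDefect TW TV br κ ι σ ρ a b (ι m) = 0 := by
  rw [jacobiDefect, hρι, hσι, map_zero, map_zero, TV.jac_d_leibniz, hanti (ι m), hanti (ι m),
    hbrι, hbrι, hbrι, hbrι, map_neg, hbrι, hρbr]
  simp only [map_sub]
  abel

lemma jacobiDefect_add_ι_right (hanti : ∀ a b, br a b = -br b a)
    (hbrι : ∀ a h, br a (ι h) = ι (TV.br01 (ρ a) h))
    (hρbr : ∀ a b, ρ (br a b) = TV.br0 (ρ a) (ρ b)) (hρι : ∀ h, ρ (ι h) = TV.d h)
    (hσι : ∀ h, σ (ι h) = 0) (a b c : E) (m : V₁) :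
    jacobiDefect TW TV br κ ι σ ρ a b (ι m + c) = jacobiDefect TW TV br κ ι σ ρ a b c := by
  have hadd : jacobiDefect TW TV br κ ι σ ρ a b (ι m + c)
      = jacobiDefect TW TV br κ ι σ ρ a b (ι m) + jacobiDefect TW TV br κ ι σ ρ a b c := by
    simp only [jacobiDefect, map_add, LinearMap.add_apply]
    abel
  rw [hadd, jacobiDefect_ι_right hanti hbrι hρbr hρι hσι, zero_add]

theorem jacobiDefect_eq_zero (hanti : ∀ a b, br a b = -br b a)
    (hbrι : ∀ a h, br a (ι h) = ι (TV.br01 (ρ a) h))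
    (hρbr : ∀ a b, ρ (br a b) = TV.br0 (ρ a) (ρ b)) (hρι : ∀ h, ρ (ι h) = TV.d h)
    (hσι : ∀ h, σ (ι h) = 0) (s : W₀ →ₗ[K] E)
    (hspan : LinearMap.range ι ⊔ LinearMap.range s = ⊤)
    (hs : ∀ x y z, jacobiDefect TW TV br κ ι σ ρ (s x) (s y) (s z) = 0) (a b c : E) :
    jacobiDefect TW TV br κ ι σ ρ a b c = 0 := by
  have hdecomp (e : E) : ∃ h x, ι h + s x = e := by
    have he : e ∈ LinearMap.range ι ⊔ LinearMap.range s := hspan ▸ Submodule.mem_top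
    obtain ⟨_, ⟨h, rfl⟩, _, ⟨x, rfl⟩, hsum⟩ := Submodule.mem_sup.mp he
    exact ⟨h, x, hsum⟩
  have hι := jacobiDefect_add_ι_right (TW := TW) (κ := κ) hanti hbrι hρbr hρι hσι
  obtain ⟨k, x, rfl⟩ := hdecomp a
  obtain ⟨l, y, rfl⟩ := hdecomp b
  obtain ⟨m, z, rfl⟩ := hdecomp c
  rw [hι, ← jacobiDefect_cycle, hι, ← jacobiDefect_cycle, hι, ← jacobiDefect_cycle]
  exact hs x y z

end JacobiDefect

namespace TwoTermMor

variable {TW : TwoTermL K W₁ W₀} {TV : TwoTermL K V₁ V₀} (f : TwoTermMor TW TV)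

def butterflyBr : (V₁ × W₀) →ₗ[K] (V₁ × W₀) →ₗ[K] (V₁ × W₀) :=
  LinearMap.mk₂ K
    (fun p q =>
      (TV.br01 (TV.d p.1) q.1 + TV.br01 (f.f₀ p.2) q.1 + TV.br10 p.1 (f.f₀ q.2) + f.ε p.2 q.2,
       TW.br0 p.2 q.2))
    (fun _ _ _ => by ext <;> simp; abel)
    (fun _ _ _ => by ext <;> simp)
    (fun _ _ _ => by ext <;> simp; abel)
    (fun _ _ _ => by ext <;> simp)

def butterflyκ : W₁ →ₗ[K] V₁ × W₀ := (-f.f₁).prod TW.d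

def butterflyρ : V₁ × W₀ →ₗ[K] V₀ := TV.d ∘ₗ LinearMap.fst K V₁ W₀ + f.f₀ ∘ₗ LinearMap.snd K V₁ W₀

@[simp] lemma butterflyBr_apply (p q : V₁ × W₀) :
    f.butterflyBr p q
      = (TV.br01 (TV.d p.1) q.1 + TV.br01 (f.f₀ p.2) q.1 + TV.br10 p.1 (f.f₀ q.2) + f.ε p.2 q.2,
         TW.br0 p.2 q.2) := rfl

@[simp] lemma butterflyκ_apply (l : W₁) : f.butterflyκ l = (-f.f₁ l, TW.d l) := rfl

@[simp] lemma butterflyρ_apply (p : V₁ × W₀) : f.butterflyρ p = TV.d p.1 + f.f₀ p.2 := rfl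

lemma butterflyρ_inl (h : V₁) : f.butterflyρ (h, 0) = TV.d h := by simp

lemma butterflyρ_butterflyκ (l : W₁) : f.butterflyρ (f.butterflyκ l) = 0 := by
  simp [f.compat_d]

lemma butterflyBr_antisymm (p q : V₁ × W₀) : f.butterflyBr p q = -f.butterflyBr q p := by
  ext
  · simp only [butterflyBr_apply, Prod.fst_neg]
    rw [TV.br01_d_comm, TV.br01_antisymm (f.f₀ p.2), TV.br01_antisymm (f.f₀ q.2), f.ε_antisymm]
    abel
  · exact TW.br0_antisymm p.2 q.2

lemma butterflyρ_butterflyBr (p q : V₁ × W₀) :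
    f.butterflyρ (f.butterflyBr p q) = TV.br0 (f.butterflyρ p) (f.butterflyρ q) := by
  simp only [butterflyBr_apply, butterflyρ_apply, map_add, LinearMap.add_apply, TV.d_br01,
    TV.d_br10, ← f.compat_br0]
  abel

lemma butterflyBr_inl (p : V₁ × W₀) (h : V₁) :
    f.butterflyBr p (h, 0) = (TV.br01 (f.butterflyρ p) h, 0) := by
  simp

lemma butterflyBr_butterflyκ (p : V₁ × W₀) (l : W₁) :
    f.butterflyBr p (f.butterflyκ l) = f.butterflyκ (TW.br01 p.2 l) := by
  ext
  · simp only [butterflyBr_apply, butterflyκ_apply, map_neg, TV.br01_d, f.compat_d,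
      ← f.compat_br01]
    abel
  · exact (TW.d_br01 p.2 l).symm

lemma jacobiDefect_inr (x y z : W₀) :
    jacobiDefect TW TV f.butterflyBr f.butterflyκ (LinearMap.inl K V₁ W₀) (LinearMap.snd K V₁ W₀)
      f.butterflyρ (0, x) (0, y) (0, z) = 0 := by
  simp only [jacobiDefect, butterflyρ_apply, butterflyκ_apply, butterflyBr_apply,
    LinearMap.coe_inl, LinearMap.snd_apply, LinearMap.zero_apply, map_zero, zero_add, add_zero,
    Prod.mk_add_mk, Prod.mk_sub_mk, Prod.mk_eq_zero]
  refine ⟨?_, sub_eq_zero.mpr (TW.d_jac x y z)⟩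
  linear_combination (norm := module) f.compat_jac x y z

end TwoTermMor

/-- The data associated to a morphism `f = (f₀,f₁,ε) : 𝕎 → 𝕍` of 2-term
L∞-algebras — the module `E = V₁ ⊕ W₀` with bracket
`[(k,x),(l,y)] = ([∂k,l] + [f₀x,l] + [k,f₀y] + ε(x,y), [x,y])` and maps
`κ(l) = (−f₁l, ∂l)`, `ι(k) = (k,0)`, `σ(k,x) = x`, `ρ(k,x) = ∂k + f₀x` —
forms a butterfly from `𝕎` to `𝕍`. -/
theorem morphism_gives_butterfly
    (TW : TwoTermL K W₁ W₀) (TV : TwoTermL K V₁ V₀) (f : TwoTermMor TW TV) :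
    ∃ B : Butterfly TW TV (V₁ × W₀),
      (∀ p q : V₁ × W₀,
        B.br p q
          = (TV.br01 (TV.d p.1) q.1 + TV.br01 (f.f₀ p.2) q.1
              + TV.br10 p.1 (f.f₀ q.2) + f.ε p.2 q.2,
             TW.br0 p.2 q.2)) ∧
      (∀ l : W₁, B.κ l = (-(f.f₁ l), TW.d l)) ∧
      (∀ k : V₁, B.ι k = (k, 0)) ∧
      (∀ p : V₁ × W₀, B.σ p = p.2) ∧
      (∀ p : V₁ × W₀, B.ρ p = TV.d p.1 + f.f₀ p.2) := by
  refine ⟨{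
      br := f.butterflyBr
      br_antisymm := f.butterflyBr_antisymm
      κ := f.butterflyκ
      ι := LinearMap.inl K V₁ W₀
      σ := LinearMap.snd K V₁ W₀
      ρ := f.butterflyρ
      σ_κ := fun _ => rfl
      ρ_ι := f.butterflyρ_inl
      ρ_κ := f.butterflyρ_butterflyκ
      σ_ι := fun _ => rfl
      ι_inj := LinearMap.inl_injective
      ker_σ_eq_range_ι := LinearMap.ker_snd K V₁ W₀
      σ_surj := LinearMap.snd_surjective
      ρ_br := f.butterflyρ_butterflyBr
      σ_br := fun _ _ => rfl
      br_ι := f.butterflyBr_inl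
      br_κ := f.butterflyBr_butterflyκ
      jacobi := fun a b c => sub_eq_zero.mp <|
        jacobiDefect_eq_zero f.butterflyBr_antisymm f.butterflyBr_inl f.butterflyρ_butterflyBr
          f.butterflyρ_inl (fun _ => rfl) (LinearMap.inr K V₁ W₀) LinearMap.sup_range_inl_inr
          f.jacobiDefect_inr a b c },
    fun _ _ => rfl, fun _ => rfl, fun _ => rfl, fun _ => rfl, fun _ => rfl⟩
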